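/- arXiv:1312.1524 — 3 statements merged into one kernel-verified Lean document; each statement's English description precedes it below -/
import Mathlib

section
/- Let m ≥ 0 be an integer and let w : ℝ^{m+1} → ℝ be any function. If λ ∈ S_m^c satisfies Σ_{j=0}^m λ_j < 1 and λ_i = 0 for some i ∈ {0,…,m}, then K_m w(λ) = 0. In other words, K_m w vanishes identically on the boundary portion ∂S_m^c \ S_m of the simplex S_m^c. -/
open Finset

/-- `b(λ) = 1 - Σ_{j=0}^m λ_j`. -/
noncomputable def bfun (m : ℕ) (lam : Fin (m + 1) → ℝ) : ℝ := 1 - ∑ j, lam j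

/-- The projection `P_I` setting the coordinates in `I` to zero. -/
def Pproj (m : ℕ) (I : Finset (Fin (m + 1))) (lam : Fin (m + 1) → ℝ) : Fin (m + 1) → ℝ :=
  fun i => if i ∈ I then 0 else lam i

/-- The trace-preserving cut-off operator
`K_m w(λ) = w(λ) + Σ_{∅ ≠ I ⊆ {0,…,m}} (−1)^{|I|} (b(λ)/b(P_I λ)) w(P_I λ)`. -/
noncomputable def Kop (m : ℕ) (w : (Fin (m + 1) → ℝ) → ℝ) (lam : Fin (m + 1) → ℝ) : ℝ :=
  w lam + ∑ I ∈ (Finset.univ : Finset (Finset (Fin (m + 1)))).erase ∅,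
    (-1 : ℝ) ^ I.card * (bfun m lam / bfun m (Pproj m I lam)) * w (Pproj m I lam)

/-- `K_m w` vanishes on the boundary portion `∂S_m^c \ S_m`: if `λ ∈ S_m^c` with
`Σ_j λ_j < 1` and some coordinate `λ_i = 0`, then `K_m w(λ) = 0`. -/
theorem Kop_eq_zero_on_boundary (m : ℕ) (w : (Fin (m + 1) → ℝ) → ℝ)
    (lam : Fin (m + 1) → ℝ) (hnn : ∀ j, 0 ≤ lam j) (hlt : ∑ j, lam j < 1)
    (i : Fin (m + 1)) (hi : lam i = 0) :
    Kop m w lam = 0 := by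
  classical
  have hb : bfun m lam ≠ 0 := by
    have : (0:ℝ) < 1 - ∑ j, lam j := by linarith
    simp [bfun]; linarith
  set f : Finset (Fin (m + 1)) → ℝ := fun I =>
    (-1 : ℝ) ^ I.card * (bfun m lam / bfun m (Pproj m I lam)) * w (Pproj m I lam) with hf
  have hP0 : Pproj m ∅ lam = lam := by funext j; simp [Pproj]
  have hKop : Kop m w lam = ∑ I : Finset (Fin (m + 1)), f I := by
    rw [Kop, ← Finset.add_sum_erase _ f (Finset.mem_univ ∅)]
    simp [hf, hP0, div_self hb]
  rw [hKop]
  -- involution: symmetric difference with {i}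
  set g : Finset (Fin (m + 1)) → Finset (Fin (m + 1)) :=
    fun I => if i ∈ I then I.erase i else insert i I with hg
  have hPg : ∀ I, Pproj m (g I) lam = Pproj m I lam := by
    intro I
    funext j
    by_cases hj : j = i
    · by_cases hiI : i ∈ I <;> simp [Pproj, hg, hj, hi, hiI]
    · by_cases hiI : i ∈ I <;> by_cases hji : j ∈ I <;>
        simp [Pproj, hg, hji, hj, hiI]
  have hcard : ∀ I, ((-1 : ℝ) ^ (g I).card) = -((-1 : ℝ) ^ I.card) := by
    intro I
    by_cases hiI : i ∈ I
    · rw [hg]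
      simp only [hiI, if_true]
      have h1 : #I - 1 + 1 = #I := Nat.succ_pred_eq_of_pos (Finset.card_pos.2 ⟨i, hiI⟩)
      have h2 : (-1:ℝ) ^ (#I) = (-1) ^ (#I - 1) * (-1) := by rw [← pow_succ, h1]
      rw [Finset.card_erase_of_mem hiI, h2]
      ring
    · rw [hg]
      simp only [hiI, if_false]
      rw [Finset.card_insert_of_notMem hiI, pow_succ]
      ring
  apply Finset.sum_involution (fun I _ => g I)
  · intro I _
    rw [hf]
    simp only
    rw [hPg, hcard]
    ring
  · intro I _ hfI
    rw [hg]
    by_cases hiI : i ∈ I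
    · simp only [hiI, if_true]
      intro h
      exact Finset.notMem_erase i I (h.symm ▸ hiI)
    · simp only [hiI, if_false]
      intro h
      exact hiI (h ▸ Finset.mem_insert_self i I)
  · intro I _; exact Finset.mem_univ _
  · intro I _
    by_cases hiI : i ∈ I
    · simp [hg, hiI, Finset.notMem_erase, Finset.insert_erase hiI]
    · simp [hg, hiI, Finset.erase_insert hiI]
end

section
/- Let m ≥ 0 be an integer and let p be a nonzero real polynomial in the m+1 variables X_0,…,X_m such that eval p(λ) = 0 for every λ ∈ ℝ^{m+1} with λ_j ≥ 0 for all j and Σ_{j=0}^m λ_j = 1 (i.e., p vanishes on the simplex S_m). Then there exists a real polynomial p' in X_0,…,X_m with total degree strictly less than the total degree of p such that p = (1 − Σ_{j=0}^m X_j) · p'. -/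
open Finset

/-- A multivariate real polynomial vanishing on a product of infinite sets is zero. -/
lemma mv_zero_of_vanish_box : ∀ (n : ℕ) (q : MvPolynomial (Fin n) ℝ) (S : Fin n → Set ℝ),
    (∀ i, (S i).Infinite) →
    (∀ x : Fin n → ℝ, (∀ i, x i ∈ S i) → MvPolynomial.eval x q = 0) → q = 0 := by
  intro n
  induction n with
  | zero =>
    intro q S hS h
    rw [MvPolynomial.eq_C_of_isEmpty q] at h ⊢
    have := h (fun i => i.elim0) (fun i => i.elim0)
    simp only [MvPolynomial.eval_C] at this
    rw [this, map_zero]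
  | succ n ih =>
    intro q S hS h
    set F := MvPolynomial.finSuccEquiv ℝ n q with hF
    have hF0 : F = 0 := by
      refine Polynomial.ext fun k => ?_
      rw [Polynomial.coeff_zero]
      apply ih _ (fun i => S i.succ) (fun i => hS i.succ)
      intro s hs
      have hmap : Polynomial.map (MvPolynomial.eval s) F = 0 := by
        apply Polynomial.eq_zero_of_infinite_isRoot
        apply (hS 0).mono
        intro y hy
        show Polynomial.IsRoot _ y
        rw [Polynomial.IsRoot, ← MvPolynomial.eval_eq_eval_mv_eval']
        exact h (Fin.cons y s) (by
          intro i
          refine Fin.cases ?_ ?_ i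
          · simpa using hy
          · intro j; simpa using hs j)
      have := Polynomial.coeff_map (MvPolynomial.eval s) k ▸ congrArg (fun P => Polynomial.coeff P k) hmap
      simpa using this
    have : q = (MvPolynomial.finSuccEquiv ℝ n).symm F := by
      rw [hF, AlgEquiv.symm_apply_apply]
    rw [this, hF0, map_zero]

/-- Total degree bound for substitution by polynomials of degree at most one. -/
lemma totalDegree_aeval_le_one {n : ℕ} (f : Fin n → MvPolynomial (Fin n) ℝ)
    (hf : ∀ i, (f i).totalDegree ≤ 1) (r : MvPolynomial (Fin n) ℝ) :
    (MvPolynomial.aeval f r).totalDegree ≤ r.totalDegree := by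
  rw [MvPolynomial.aeval_def, MvPolynomial.eval₂_eq]
  apply MvPolynomial.totalDegree_finsetSum_le
  intro d hd
  refine (MvPolynomial.totalDegree_mul _ _).trans ?_
  have h1 : ((algebraMap ℝ (MvPolynomial (Fin n) ℝ)) (MvPolynomial.coeff d r)).totalDegree = 0 := by
    rw [MvPolynomial.algebraMap_eq, MvPolynomial.totalDegree_C]
  rw [h1, zero_add]
  refine (MvPolynomial.totalDegree_finset_prod _ _).trans ?_
  have h2 : ∑ i ∈ d.support, ((f i) ^ (d i)).totalDegree ≤ ∑ i ∈ d.support, d i := by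
    apply Finset.sum_le_sum
    intro i _
    calc ((f i) ^ (d i)).totalDegree ≤ d i * (f i).totalDegree :=
          MvPolynomial.totalDegree_pow _ _
      _ ≤ d i * 1 := Nat.mul_le_mul_left _ (hf i)
      _ = d i := Nat.mul_one _
  refine h2.trans ?_
  have : ∑ i ∈ d.support, d i = d.sum fun _ e => e := rfl
  rw [this]
  exact MvPolynomial.le_totalDegree hd

/-- If a nonzero polynomial in `m+1` variables vanishes on the simplex
`S_m = {λ : λ_j ≥ 0, Σ λ_j = 1}`, then it is divisible by `1 − Σ_j X_j`, with quotient
of strictly smaller total degree. -/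
theorem vanishing_on_simplex_factor (m : ℕ) (p : MvPolynomial (Fin (m + 1)) ℝ)
    (hp : p ≠ 0)
    (hvanish : ∀ lam : Fin (m + 1) → ℝ, (∀ j, 0 ≤ lam j) → ∑ j, lam j = 1 →
      MvPolynomial.eval lam p = 0) :
    ∃ p' : MvPolynomial (Fin (m + 1)) ℝ, p'.totalDegree < p.totalDegree ∧
      p = (1 - ∑ j : Fin (m + 1), MvPolynomial.X j) * p' := by
  classical
  set g : MvPolynomial (Fin (m + 1)) ℝ := 1 - ∑ j : Fin (m + 1), MvPolynomial.X j with hg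
  set f : Fin (m + 1) → MvPolynomial (Fin (m + 1)) ℝ :=
    Fin.cons g (fun i : Fin m => MvPolynomial.X i.succ) with hfdef
  -- f sends each X_i to a degree ≤ 1 polynomial
  have hgdeg : g.totalDegree ≤ 1 := by
    rw [hg, sub_eq_add_neg]
    refine (MvPolynomial.totalDegree_add _ _).trans ?_
    simp only [MvPolynomial.totalDegree_one, MvPolynomial.totalDegree_neg]
    refine max_le (by norm_num) ?_
    exact MvPolynomial.totalDegree_finsetSum_le (fun i _ => by
      rw [MvPolynomial.totalDegree_X])
  have hfdeg : ∀ i, (f i).totalDegree ≤ 1 := by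
    intro i
    refine Fin.cases ?_ ?_ i
    · simpa [hfdef] using hgdeg
    · intro j
      simp [hfdef, MvPolynomial.totalDegree_X]
  -- τ is an involution
  have hff : ∀ i, MvPolynomial.aeval f (f i) = MvPolynomial.X i := by
    intro i
    refine Fin.cases ?_ ?_ i
    · show MvPolynomial.aeval f (f 0) = _
      rw [hfdef]
      simp only [Fin.cons_zero, hg]
      rw [map_sub, map_one, map_sum]
      simp only [MvPolynomial.aeval_X]
      rw [Fin.sum_univ_succ (f := f)]
      simp only [hfdef, Fin.cons_zero, Fin.cons_succ, hg]
      rw [Fin.sum_univ_succ (f := fun j : Fin (m+1) => (MvPolynomial.X j : MvPolynomial (Fin (m+1)) ℝ))]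
      ring
    · intro j
      show MvPolynomial.aeval f (f j.succ) = _
      rw [hfdef]
      simp [Fin.cons_succ]
  have hinvol : ∀ r : MvPolynomial (Fin (m + 1)) ℝ,
      MvPolynomial.aeval f (MvPolynomial.aeval f r) = r := by
    have hcomp : (MvPolynomial.aeval f).comp (MvPolynomial.aeval f) =
        AlgHom.id ℝ (MvPolynomial (Fin (m + 1)) ℝ) := by
      apply MvPolynomial.algHom_ext
      intro i
      simp only [AlgHom.comp_apply, MvPolynomial.aeval_X, AlgHom.id_apply]
      exact hff i
    intro r
    have := congrArg (fun φ => φ r) hcomp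
    simpa using this
  -- evaluation of τ r
  have heval : ∀ (r : MvPolynomial (Fin (m + 1)) ℝ) (x : Fin (m + 1) → ℝ),
      MvPolynomial.eval x (MvPolynomial.aeval f r) =
        MvPolynomial.eval (fun i => MvPolynomial.eval x (f i)) r := by
    intro r x
    rw [MvPolynomial.aeval_def, MvPolynomial.algebraMap_eq, ← MvPolynomial.eval_assoc]
    rfl
  set q : MvPolynomial (Fin (m + 1)) ℝ := MvPolynomial.aeval f p with hq
  set F := MvPolynomial.finSuccEquiv ℝ m q with hFdef
  -- the constant coefficient (in X_0) of q vanishes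
  have hc0 : F.coeff 0 = 0 := by
    apply mv_zero_of_vanish_box m _ (fun _ => Set.Ioo (0 : ℝ) (1 / (m + 1)))
    · intro i
      apply Set.Ioo_infinite
      positivity
    · intro s hs
      have hsum_le : ∑ i, s i ≤ 1 := by
        have h1 : ∑ i, s i ≤ ∑ _i : Fin m, (1 / (m + 1) : ℝ) :=
          Finset.sum_le_sum (fun i _ => (hs i).2.le)
        have h2 : ∑ _i : Fin m, (1 / (m + 1) : ℝ) = m * (1 / (m + 1)) := by
          rw [Finset.sum_const, Finset.card_univ, Fintype.card_fin, nsmul_eq_mul]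
        have h3 : (m : ℝ) * (1 / (m + 1)) ≤ 1 := by
          rw [mul_one_div]
          apply div_le_one_of_le₀ (by linarith [Nat.cast_nonneg (α := ℝ) m]) (by positivity)
        linarith
      have key : MvPolynomial.eval (Fin.cons (0 : ℝ) s) q = 0 := by
        rw [hq, heval]
        apply hvanish
        · intro j
          refine Fin.cases ?_ ?_ j
          · simp only [hfdef, Fin.cons_zero, hg]
            rw [map_sub, map_one, map_sum]
            simp only [MvPolynomial.eval_X]
            rw [Fin.sum_univ_succ (f := fun j => Fin.cons (0 : ℝ) s j)]
            simp only [Fin.cons_zero, Fin.cons_succ]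
            linarith
          · intro i
            simp only [hfdef, Fin.cons_succ, MvPolynomial.eval_X]
            exact (hs i).1.le
        · rw [Fin.sum_univ_succ]
          simp only [hfdef, Fin.cons_zero, Fin.cons_succ, MvPolynomial.eval_X, hg]
          rw [map_sub, map_one, map_sum]
          simp only [MvPolynomial.eval_X]
          rw [Fin.sum_univ_succ (f := fun j => Fin.cons (0 : ℝ) s j)]
          simp only [Fin.cons_zero, Fin.cons_succ]
          ring
      rw [MvPolynomial.eval_eq_eval_mv_eval'] at key
      rw [← Polynomial.coeff_map, Polynomial.coeff_zero_eq_eval_zero]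
      exact key
  -- hence X 0 divides q
  obtain ⟨G, hG⟩ : Polynomial.X ∣ F := Polynomial.X_dvd_iff.mpr hc0
  set q' : MvPolynomial (Fin (m + 1)) ℝ := (MvPolynomial.finSuccEquiv ℝ m).symm G with hq'
  have hq_factor : q = MvPolynomial.X 0 * q' := by
    have h1 : q = (MvPolynomial.finSuccEquiv ℝ m).symm F := by
      rw [hFdef, AlgEquiv.symm_apply_apply]
    rw [h1, hG, map_mul, hq']
    congr 1
    have : MvPolynomial.finSuccEquiv ℝ m (MvPolynomial.X 0) = Polynomial.X :=
      MvPolynomial.finSuccEquiv_X_zero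
    rw [← this, AlgEquiv.symm_apply_apply]
  -- the factorization of p
  have hfact : p = g * MvPolynomial.aeval f q' := by
    have : p = MvPolynomial.aeval f q := (hinvol p).symm
    rw [this, hq_factor, map_mul]
    congr 1
    rw [show (MvPolynomial.X 0 : MvPolynomial (Fin (m + 1)) ℝ) = MvPolynomial.X (0 : Fin (m+1)) from rfl,
      MvPolynomial.aeval_X]
    simp [hfdef]
  -- q' is nonzero
  have hq'ne : q' ≠ 0 := by
    intro h0
    apply hp
    have : q = 0 := by rw [hq_factor, h0, mul_zero]
    have := congrArg (MvPolynomial.aeval f) this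
    rw [hinvol p] at this
    simpa using this
  -- degree comparisons
  have hdeg1 : q.totalDegree ≤ p.totalDegree := by
    rw [hq]; exact totalDegree_aeval_le_one f hfdeg p
  have hdeg2 : q'.totalDegree + 1 ≤ q.totalDegree := by
    obtain ⟨d, hd, hdmax⟩ := q'.support.exists_mem_eq_sup
      (MvPolynomial.support_nonempty.mpr hq'ne) (fun d => d.sum fun _ e => e)
    have hcoeff : MvPolynomial.coeff (Finsupp.single 0 1 + d) q = MvPolynomial.coeff d q' := by
      rw [hq_factor, MvPolynomial.coeff_X_mul]
    have hmem : (Finsupp.single 0 1 + d) ∈ q.support := by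
      rw [MvPolynomial.mem_support_iff, hcoeff]
      exact MvPolynomial.mem_support_iff.mp hd
    have := MvPolynomial.le_totalDegree hmem
    have hsum : ((Finsupp.single 0 1 + d).sum fun _ e => e) = 1 + (d.sum fun _ e => e) := by
      rw [Finsupp.sum_add_index (by simp) (by simp)]
      simp
    rw [hsum] at this
    have hdval : (d.sum fun _ e => e) = q'.totalDegree := by
      rw [MvPolynomial.totalDegree, ← hdmax]
    omega
  have hdeg3 : (MvPolynomial.aeval f q').totalDegree ≤ q'.totalDegree :=
    totalDegree_aeval_le_one f hfdeg q'
  exact ⟨MvPolynomial.aeval f q', by omega, by rw [hfact, hg]⟩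
end

section
/- Let 0 ≤ m < n be integers, let x_0,…,x_n ∈ ℝ^n be affinely independent with T = conv{x_0,…,x_n}, let λ_0(x),…,λ_n(x) be the barycentric coordinates with respect to x_0,…,x_n, and set λ_f(x) = (λ_0(x),…,λ_m(x)). Let v : ℝ^n → ℝ be continuously differentiable. Then the function F(x) = ⨍_T v(G_m(λ_f(x), y)) dy is differentiable at every x ∈ ℝ^n, and for every h ∈ ℝ^n its derivative satisfies DF(x)h = ⨍_T Dv(G_m(λ_f(x), y)) [ Σ_{j=0}^m (Dλ_j h)(x_j − y) ] dy, where Dλ_j denotes the constant differential of the affine barycentric coordinate function λ_j and Dv the total derivative of v. (Differentiation under the integral for the pulled-back averaging operator.) -/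
open Finset MeasureTheory

/-- `G_m(λ, y) = Σ_{j=0}^m λ_j x_j + b(λ) y`. -/
noncomputable def Gmap (n m : ℕ) (x : Fin (m + 1) → Fin n → ℝ)
    (lam : Fin (m + 1) → ℝ) (y : Fin n → ℝ) : Fin n → ℝ :=
  (∑ j, lam j • x j) + bfun m lam • y

/-- The averaged pull-back `⨍_T v(G_m(λ, y)) dy = vol(T)⁻¹ ∫_T v(G_m(λ, y)) dy`. -/
noncomputable def Avg (n m : ℕ) (x : Fin (m + 1) → Fin n → ℝ) (T : Set (Fin n → ℝ))
    (v : (Fin n → ℝ) → ℝ) (lam : Fin (m + 1) → ℝ) : ℝ :=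
  (volume T).toReal⁻¹ * ∫ y in T, v (Gmap n m x lam y)

/-!
`G_m(λ(z), y) = y + Σ_j λ_j(z) (x_j - y)` is affine in `z`, with linear part depending
continuously on `y`. Hence both the integrand `v(G_m(λ(z), y))` and its `z`-derivative
`Dv(G_m(λ(z), y)) ∘ D_z G_m` are jointly continuous in `(z, y)`, so they are uniformly bounded
for `y` in the compact simplex and `z` in a compact neighbourhood, and dominated convergence
allows differentiating under the integral sign.
-/

theorem AffineMap.hasFDerivAt_of_finiteDimensional {𝕜 E F : Type*} [NontriviallyNormedField 𝕜]
    [CompleteSpace 𝕜] [NormedAddCommGroup E] [NormedSpace 𝕜 E] [FiniteDimensional 𝕜 E]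
    [NormedAddCommGroup F] [NormedSpace 𝕜 F] (f : E →ᵃ[𝕜] F) (z : E) :
    HasFDerivAt f (LinearMap.toContinuousLinearMap f.linear) z :=
  (⟨f, f.continuous_of_finiteDimensional⟩ : E →ᴬ[𝕜] F).hasFDerivAt

open Set in
theorem hasFDerivAt_setIntegral_of_continuous {H Y E : Type*}
    [NormedAddCommGroup H] [NormedSpace ℝ H] [LocallyCompactSpace H]
    [TopologicalSpace Y] [T2Space Y] [MeasurableSpace Y] [OpensMeasurableSpace Y]
    {μ : Measure Y} [IsFiniteMeasureOnCompacts μ]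
    [NormedAddCommGroup E] [NormedSpace ℝ E]
    [SecondCountableTopologyEither Y E] [SecondCountableTopologyEither Y (H →L[ℝ] E)]
    {f : H → Y → E} {f' : H → Y → H →L[ℝ] E}
    (hf : Continuous fun p : H × Y => f p.1 p.2) (hf' : Continuous fun p : H × Y => f' p.1 p.2)
    (hderiv : ∀ x y, HasFDerivAt (f · y) (f' x y) x) {s : Set Y} (hs : IsCompact s) (x₀ : H) :
    HasFDerivAt (fun x => ∫ y in s, f x y ∂μ) (∫ y in s, f' x₀ y ∂μ) x₀ := by
  obtain ⟨U, hU, hUx₀⟩ := exists_compact_mem_nhds x₀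
  obtain ⟨M, hM⟩ := (hU.prod hs).bddAbove_image hf'.norm.continuousOn
  refine hasFDerivAt_integral_of_dominated_of_fderiv_le (bound := fun _ => M) hUx₀
    (.of_forall fun x => (hf.comp (Continuous.prodMk_right x)).aestronglyMeasurable)
    ((hf.comp (Continuous.prodMk_right x₀)).continuousOn.integrableOn_compact hs)
    (hf'.comp (Continuous.prodMk_right x₀)).aestronglyMeasurable ?_
    (integrableOn_const hs.measure_ne_top) (.of_forall fun y x _ => hderiv x y)
  filter_upwards [ae_restrict_mem hs.measurableSet] with y hy x hx
  exact hM (mem_image_of_mem _ (mk_mem_prod hx hy))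

section AffineParameter

variable (n m : ℕ) (x : Fin (m + 1) → Fin n → ℝ) (lam : Fin (m + 1) → (Fin n → ℝ) →ᵃ[ℝ] ℝ)

theorem Gmap_eq_add_sum_smul_sub (l : Fin (m + 1) → ℝ) (y : Fin n → ℝ) :
    Gmap n m x l y = y + ∑ j, l j • (x j - y) := by
  simp only [Gmap, bfun, smul_sub, sum_sub_distrib, sub_smul, one_smul, sum_smul]
  abel

noncomputable def gmapDeriv (y : Fin n → ℝ) : (Fin n → ℝ) →L[ℝ] Fin n → ℝ :=
  ∑ j, (LinearMap.toContinuousLinearMap (lam j).linear).smulRight (x j - y)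

theorem hasFDerivAt_Gmap_comp_affine (y z : Fin n → ℝ) :
    HasFDerivAt (fun z => Gmap n m x (fun i => lam i z) y) (gmapDeriv n m x lam y) z := by
  simp only [Gmap_eq_add_sum_smul_sub]
  exact (HasFDerivAt.fun_sum fun j _ =>
    ((lam j).hasFDerivAt_of_finiteDimensional z).smul_const (x j - y)).const_add y

theorem continuous_gmapDeriv : Continuous (gmapDeriv n m x lam) := by
  unfold gmapDeriv
  fun_prop

theorem continuous_Gmap_comp_affine :
    Continuous fun p : (Fin n → ℝ) × (Fin n → ℝ) => Gmap n m x (fun i => lam i p.1) p.2 := by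
  have := fun j => (lam j).continuous_of_finiteDimensional
  simp only [Gmap_eq_add_sum_smul_sub]
  fun_prop

theorem continuous_fderiv_comp_gmapDeriv {v : (Fin n → ℝ) → ℝ} (hv : ContDiff ℝ 1 v) :
    Continuous fun p : (Fin n → ℝ) × (Fin n → ℝ) =>
      (fderiv ℝ v (Gmap n m x (fun i => lam i p.1) p.2)).comp (gmapDeriv n m x lam p.2) :=
  ((hv.continuous_fderiv one_ne_zero).comp (continuous_Gmap_comp_affine n m x lam)).clm_comp
    ((continuous_gmapDeriv n m x lam).comp continuous_snd)

theorem hasFDerivAt_Avg_comp_affine {T : Set (Fin n → ℝ)} (hT : IsCompact T)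
    {v : (Fin n → ℝ) → ℝ} (hv : ContDiff ℝ 1 v) (z : Fin n → ℝ) :
    HasFDerivAt (fun z => Avg n m x T v (fun i => lam i z))
      ((volume T).toReal⁻¹ • ∫ y in T,
        (fderiv ℝ v (Gmap n m x (fun i => lam i z) y)).comp (gmapDeriv n m x lam y)) z :=
  (hasFDerivAt_setIntegral_of_continuous
    (hv.continuous.comp (continuous_Gmap_comp_affine n m x lam))
    (continuous_fderiv_comp_gmapDeriv n m x lam hv)
    (fun z y => ((hv.differentiable one_ne_zero _).hasFDerivAt).comp z
      (hasFDerivAt_Gmap_comp_affine n m x lam y z)) hT z).const_mul _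

theorem fderiv_Avg_comp_affine_apply {T : Set (Fin n → ℝ)} (hT : IsCompact T)
    {v : (Fin n → ℝ) → ℝ} (hv : ContDiff ℝ 1 v) (z h : Fin n → ℝ) :
    fderiv ℝ (fun z => Avg n m x T v (fun i => lam i z)) z h =
      (volume T).toReal⁻¹ * ∫ y in T,
        fderiv ℝ v (Gmap n m x (fun i => lam i z) y) (∑ j, (lam j).linear h • (x j - y)) := by
  have hint : IntegrableOn (fun y =>
      (fderiv ℝ v (Gmap n m x (fun i => lam i z) y)).comp (gmapDeriv n m x lam y)) T :=
    ((continuous_fderiv_comp_gmapDeriv n m x lam hv).comp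
      (Continuous.prodMk_right z)).continuousOn.integrableOn_compact hT
  rw [(hasFDerivAt_Avg_comp_affine n m x lam hT hv z).fderiv, smul_apply,
    ContinuousLinearMap.integral_apply hint, smul_eq_mul]
  simp [gmapDeriv]

end AffineParameter

/-- Differentiation under the integral for the pulled-back averaging operator: for `v`
continuously differentiable, `F(z) = ⨍_T v(G_m(λ_f(z), y)) dy` is differentiable
everywhere and `DF(z)h = ⨍_T Dv(G_m(λ_f(z), y)) [Σ_{j≤m} (Dλ_j h)(x_j − y)] dy`, where
`Dλ_j` is the (constant) linear part of the affine barycentric coordinate `λ_j`. -/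
theorem average_fderiv (n m : ℕ) (hmn : m < n)
    (x : Fin (n + 1) → Fin n → ℝ)
    (lam : Fin (n + 1) → ((Fin n → ℝ) →ᵃ[ℝ] ℝ))
    (v : (Fin n → ℝ) → ℝ) (hv : ContDiff ℝ 1 v) :
    Differentiable ℝ (fun z : Fin n → ℝ =>
      Avg n m (fun j : Fin (m + 1) => x (Fin.castLE (by omega) j))
        (convexHull ℝ (Set.range x)) v
        (fun i : Fin (m + 1) => lam (Fin.castLE (by omega) i) z)) ∧
    ∀ (z h : Fin n → ℝ),
      fderiv ℝ (fun z : Fin n → ℝ =>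
          Avg n m (fun j : Fin (m + 1) => x (Fin.castLE (by omega) j))
            (convexHull ℝ (Set.range x)) v
            (fun i : Fin (m + 1) => lam (Fin.castLE (by omega) i) z)) z h =
        (volume (convexHull ℝ (Set.range x))).toReal⁻¹ *
          ∫ y in convexHull ℝ (Set.range x),
            fderiv ℝ v (Gmap n m (fun j : Fin (m + 1) => x (Fin.castLE (by omega) j))
                (fun i : Fin (m + 1) => lam (Fin.castLE (by omega) i) z) y)
              (∑ j : Fin (m + 1), ((lam (Fin.castLE (by omega) j)).linear h) •
                (x (Fin.castLE (by omega) j) - y)) := by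
  have hT : IsCompact (convexHull ℝ (Set.range x)) := (Set.finite_range x).isCompact_convexHull ℝ
  exact ⟨fun z => (hasFDerivAt_Avg_comp_affine n m _ _ hT hv z).differentiableAt,
    fderiv_Avg_comp_affine_apply n m _ _ hT hv⟩
end
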